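/- arXiv:math/0009137 — 3 statements merged into one kernel-verified Lean document; each statement's English description precedes it below -/
import Mathlib

section
/- Let d ≥ 2, B > 0, and let K ⊆ ℝ^d be a convex body of constant width B. Then K is strictly convex: for all distinct x, y ∈ K and all t ∈ (0,1), the point t·x + (1−t)·y lies in the interior of K. -/
/-!
If a point of the open segment between `x, y ∈ K` were on the boundary of `K`, a supporting hyperplane
at it, with unit normal `e`, would contain the whole segment, so `x` and `y` would both
maximise `⟪·, e⟫` on `K`. Let `w` maximise `⟪·, -e⟫`. Then `⟪x - w, e⟫` is the width `B` of `K`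
in direction `e`, while `‖x - w‖ ≤ B` because `B` is also the diameter of `K`; by the equality
case of Cauchy–Schwarz, `x - w = B • e`, and likewise `y - w = B • e`, so `x = y`.
-/

open MeasureTheory Real

/-- The support function of a set `K ⊆ ℝᵈ`: `h_K(u) = sup_{x ∈ K} ⟨x, u⟩`. -/
noncomputable def suppFn {d : ℕ} (K : Set (EuclideanSpace ℝ (Fin d)))
    (u : EuclideanSpace ℝ (Fin d)) : ℝ :=
  sSup ((fun x => (inner ℝ x u : ℝ)) '' K)

/-- A convex body in ℝᵈ: compact, convex, with nonempty interior. -/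
def IsConvexBody {d : ℕ} (K : Set (EuclideanSpace ℝ (Fin d))) : Prop :=
  IsCompact K ∧ Convex ℝ K ∧ (interior K).Nonempty

/-- `K` has constant width `B`: for every unit vector `u`,
`h_K(u) + h_K(-u) = B`. -/
def HasConstantWidth {d : ℕ} (K : Set (EuclideanSpace ℝ (Fin d))) (B : ℝ) : Prop :=
  ∀ u : EuclideanSpace ℝ (Fin d), ‖u‖ = 1 → suppFn K u + suppFn K (-u) = B

open Set
open scoped RealInnerProductSpace

theorem IsCompact.nonempty_toExposed {E : Type*} [AddCommMonoid E] [TopologicalSpace E]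
    [Module ℝ E] {A : Set E} (hA : IsCompact A) (hne : A.Nonempty) (l : StrongDual ℝ E) :
    (l.toExposed A).Nonempty :=
  let ⟨x, hx, hmax⟩ := hA.exists_isMaxOn hne l.continuous.continuousOn
  ⟨x, hx, fun _ hy => hmax hy⟩

section InnerProductSpace

variable {E : Type*} [NormedAddCommGroup E] [InnerProductSpace ℝ E]

theorem eq_inner_smul_of_norm_le_inner {v e : E} (he : ‖e‖ = 1) (h : ‖v‖ ≤ ⟪v, e⟫) :
    v = ⟪v, e⟫ • e := by
  have hnorm : ⟪v, e⟫ = ‖v‖ := le_antisymm (by simpa [he] using real_inner_le_norm v e) h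
  have := inner_eq_norm_mul_iff_real.mp (by rw [hnorm, he, mul_one])
  rwa [he, one_smul, ← hnorm] at this

theorem exists_norm_eq_one_inner_le_of_notMem_interior [CompleteSpace E] {K : Set E}
    (hK : Convex ℝ K) (hint : (interior K).Nonempty) {z : E} (hz : z ∉ interior K) :
    ∃ e : E, ‖e‖ = 1 ∧ ∀ p ∈ K, ⟪e, p⟫ ≤ ⟪e, z⟫ := by
  obtain ⟨f, c, hf, hfK, hfz⟩ := geometric_hahn_banach_of_nonempty_interior hK
    (convex_singleton z) (disjoint_singleton_right.2 hz) hint (singleton_nonempty z)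
  set u := (InnerProductSpace.toDual ℝ E).symm f
  have hu : u ≠ 0 := by simpa [u] using hf
  refine ⟨‖u‖⁻¹ • u, norm_smul_inv_norm hu, fun p hp => ?_⟩
  simp only [real_inner_smul_left, u, InnerProductSpace.toDual_symm_apply]
  gcongr
  exact (hfK p hp).trans (hfz z rfl)

end InnerProductSpace

section SupportFunction

variable {d : ℕ} {K : Set (EuclideanSpace ℝ (Fin d))} {B : ℝ}

theorem inner_le_suppFn (hK : IsCompact K) {x : EuclideanSpace ℝ (Fin d)} (hx : x ∈ K)
    (v : EuclideanSpace ℝ (Fin d)) : ⟪x, v⟫ ≤ suppFn K v :=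
  le_csSup (hK.image (continuous_id.inner continuous_const)).bddAbove ⟨x, hx, rfl⟩

theorem suppFn_eq_inner_of_mem_toExposed {e x : EuclideanSpace ℝ (Fin d)}
    (hx : x ∈ (innerSL ℝ e).toExposed K) : suppFn K e = ⟪x, e⟫ :=
  IsGreatest.csSup_eq ⟨⟨x, hx.1, rfl⟩, by
    rintro _ ⟨p, hp, rfl⟩
    simpa only [innerSL_apply_apply, real_inner_comm e] using hx.2 p hp⟩

theorem HasConstantWidth.norm_sub_le (hw : HasConstantWidth K B) (hK : IsCompact K)
    {p q : EuclideanSpace ℝ (Fin d)} (hp : p ∈ K) (hq : q ∈ K) (hpq : p ≠ q) :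
    ‖p - q‖ ≤ B := by
  have hv : p - q ≠ 0 := sub_ne_zero.2 hpq
  set e := ‖p - q‖⁻¹ • (p - q)
  calc ‖p - q‖ = ⟪p, e⟫ + ⟪q, -e⟫ := by
        rw [inner_neg_right, ← sub_eq_add_neg, ← inner_sub_left, real_inner_smul_right,
          real_inner_self_eq_norm_mul_norm]
        field_simp
    _ ≤ suppFn K e + suppFn K (-e) :=
        add_le_add (inner_le_suppFn hK hp e) (inner_le_suppFn hK hq (-e))
    _ = B := hw e (norm_smul_inv_norm hv)

theorem HasConstantWidth.toExposed_subsingleton (hw : HasConstantWidth K B) (hK : IsCompact K)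
    {e : EuclideanSpace ℝ (Fin d)} (he : ‖e‖ = 1) :
    ((innerSL ℝ e).toExposed K).Subsingleton := by
  intro p hp q hq
  obtain ⟨w, hw'⟩ := hK.nonempty_toExposed ⟨p, hp.1⟩ (innerSL ℝ (-e))
  have key : ∀ x ∈ (innerSL ℝ e).toExposed K, x - w = B • e := by
    intro x hx
    have hB : ⟪x - w, e⟫ = B := by
      rw [← hw e he, suppFn_eq_inner_of_mem_toExposed hx, suppFn_eq_inner_of_mem_toExposed hw',
        inner_sub_left, inner_neg_right, sub_eq_add_neg]
    have hle : ‖x - w‖ ≤ ⟪x - w, e⟫ := by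
      rcases eq_or_ne x w with rfl | hxw
      · simp
      · exact hB ▸ hw.norm_sub_le hK hx.1 hw'.1 hxw
    rw [eq_inner_smul_of_norm_le_inner he hle, hB]
  exact sub_left_injective ((key p hp).trans (key q hq).symm)

end SupportFunction

theorem constant_width_strictly_convex_general (d : ℕ) (B : ℝ)
    (K : Set (EuclideanSpace ℝ (Fin d)))
    (hK : IsConvexBody K) (hw : HasConstantWidth K B) :
    ∀ x ∈ K, ∀ y ∈ K, x ≠ y → ∀ t : ℝ, 0 < t → t < 1 →
      t • x + (1 - t) • y ∈ interior K := by
  obtain ⟨hKc, hKconv, hKint⟩ := hK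
  intro x hx y hy hxy t ht0 ht1
  have hseg : t • x + (1 - t) • y ∈ openSegment ℝ x y :=
    ⟨t, 1 - t, ht0, by linarith, by ring, rfl⟩
  by_contra hz
  obtain ⟨e, he, hmax⟩ := exists_norm_eq_one_inner_le_of_notMem_interior hKconv hKint hz
  have hzF : t • x + (1 - t) • y ∈ (innerSL ℝ e).toExposed K :=
    ⟨hKconv.openSegment_subset hx hy hseg, hmax⟩
  have hF : IsExtreme ℝ K ((innerSL ℝ e).toExposed K) :=
    ContinuousLinearMap.toExposed.isExposed.isExtreme
  exact hxy (hw.toExposed_subsingleton hKc he (hF.left_mem_of_mem_openSegment hx hy hzF hseg)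
    (hF.right_mem_of_mem_openSegment hx hy hzF hseg))

/-- A convex body of constant width is strictly convex: every proper convex
combination of two distinct points of `K` lies in the interior of `K`. -/
theorem constant_width_strictly_convex (d : ℕ) (hd : 2 ≤ d) (B : ℝ) (hB : 0 < B)
    (K : Set (EuclideanSpace ℝ (Fin d)))
    (hK : IsConvexBody K) (hw : HasConstantWidth K B) :
    ∀ x ∈ K, ∀ y ∈ K, x ≠ y → ∀ t : ℝ, 0 < t → t < 1 →
      t • x + (1 - t) • y ∈ interior K :=
  constant_width_strictly_convex_general d B K hK hw
end

section
/- Let R : ℝ → ℝ be a continuous 2π-periodic function with ∫₀^{2π} R(θ) cos θ dθ = 0 and ∫₀^{2π} R(θ) sin θ dθ = 0. Then there exists a unique twice continuously differentiable 2π-periodic function p : ℝ → ℝ satisfying p'' + p = R together with ∫₀^{2π} p(θ) cos θ dθ = 0 and ∫₀^{2π} p(θ) sin θ dθ = 0. -/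
open MeasureTheory Real intervalIntegral

/-!
Variation of parameters solves `p'' + p = R` by
`p₀ θ = sin θ ∫₀^θ R cos - cos θ ∫₀^θ R sin`, and the orthogonality of `R` to `cos` and
`sin` is exactly what makes both primitives, hence `p₀`, `2π`-periodic. Subtracting from `p₀` its
projection onto the kernel `span {cos, sin}` gives an orthogonal solution. Two solutions differ
by some `y` with `y'' + y = 0`, which is `a cos + b sin` because `y cos - y' sin` and
`y sin + y' cos` have zero derivative; orthogonality then forces `a = b = 0`, since over a
period `∫ cos² = ∫ sin² = π` and `∫ sin cos = 0`.
-/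

theorem Function.Periodic.periodic_intervalIntegral_of_integral_eq_zero
    {E : Type*} [NormedAddCommGroup E] [NormedSpace ℝ E] {f : ℝ → E} {T : ℝ}
    (hf : Function.Periodic f T) (h_int : ∀ t₁ t₂, IntervalIntegrable f volume t₁ t₂)
    (h_zero : ∫ x in 0..T, f x = 0) :
    Function.Periodic (fun θ => ∫ x in 0..θ, f x) T := fun θ => by
  simp only [hf.intervalIntegral_add_eq_add 0 θ h_int, zero_add, h_zero, add_zero]

theorem integral_add_cos_sin_mul_cos {f : ℝ → ℝ} (hf : IntervalIntegrable f volume 0 (2 * π))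
    (a b : ℝ) :
    ∫ θ in 0..2 * π, (f θ + a * cos θ + b * sin θ) * cos θ =
      (∫ θ in 0..2 * π, f θ * cos θ) + a * π := by
  calc _ = ∫ θ in 0..2 * π, f θ * cos θ + (a * cos θ ^ 2 + b * (sin θ * cos θ)) :=
        integral_congr fun θ _ => by ring
    _ = (∫ θ in 0..2 * π, f θ * cos θ) +
          (a * ∫ θ in 0..2 * π, cos θ ^ 2) + b * ∫ θ in 0..2 * π, sin θ * cos θ := by
        rw [intervalIntegral.integral_add (hf.mul_continuousOn continuous_cos.continuousOn)
          (by apply Continuous.intervalIntegrable; fun_prop), intervalIntegral.integral_add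
          (by apply Continuous.intervalIntegrable; fun_prop)
          (by apply Continuous.intervalIntegrable; fun_prop),
          intervalIntegral.integral_const_mul, intervalIntegral.integral_const_mul, add_assoc]
    _ = _ := by simp [integral_cos_sq, integral_sin_mul_cos₁]

theorem integral_add_cos_sin_mul_sin {f : ℝ → ℝ} (hf : IntervalIntegrable f volume 0 (2 * π))
    (a b : ℝ) :
    ∫ θ in 0..2 * π, (f θ + a * cos θ + b * sin θ) * sin θ =
      (∫ θ in 0..2 * π, f θ * sin θ) + b * π := by
  calc _ = ∫ θ in 0..2 * π, f θ * sin θ + (b * sin θ ^ 2 + a * (sin θ * cos θ)) :=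
        integral_congr fun θ _ => by ring
    _ = (∫ θ in 0..2 * π, f θ * sin θ) +
          (b * ∫ θ in 0..2 * π, sin θ ^ 2) + a * ∫ θ in 0..2 * π, sin θ * cos θ := by
        rw [intervalIntegral.integral_add (hf.mul_continuousOn continuous_sin.continuousOn)
          (by apply Continuous.intervalIntegrable; fun_prop), intervalIntegral.integral_add
          (by apply Continuous.intervalIntegrable; fun_prop)
          (by apply Continuous.intervalIntegrable; fun_prop),
          intervalIntegral.integral_const_mul, intervalIntegral.integral_const_mul, add_assoc]
    _ = _ := by simp [integral_sin_sq, integral_sin_mul_cos₁]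

/-- `p'' + p = R`, stated with an explicit derivative `p'` so that `deriv` and its junk values
stay out of the argument. -/
def SolvesHarmonicOscillator (R p : ℝ → ℝ) : Prop :=
  ∃ p' : ℝ → ℝ, (∀ θ, HasDerivAt p (p' θ) θ) ∧ ∀ θ, HasDerivAt p' (R θ - p θ) θ

namespace SolvesHarmonicOscillator

variable {R p q : ℝ → ℝ}

theorem of_contDiff (hp : ContDiff ℝ 2 p) (hode : ∀ θ, deriv (deriv p) θ + p θ = R θ) :
    SolvesHarmonicOscillator R p := by
  have hp' : ContDiff ℝ 1 (deriv p) := (contDiff_succ_iff_deriv.mp hp).2.2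
  refine ⟨deriv p, fun θ => (hp.differentiable two_ne_zero θ).hasDerivAt, fun θ => ?_⟩
  rw [← hode θ, add_sub_cancel_right]
  exact (hp'.differentiable one_ne_zero θ).hasDerivAt

theorem continuous (h : SolvesHarmonicOscillator R p) : Continuous p :=
  let ⟨_, h₁, _⟩ := h
  continuous_iff_continuousAt.2 fun θ => (h₁ θ).continuousAt

theorem deriv_deriv_add (h : SolvesHarmonicOscillator R p) (θ : ℝ) :
    deriv (deriv p) θ + p θ = R θ := by
  obtain ⟨p', h₁, h₂⟩ := h
  rw [funext fun θ => (h₁ θ).deriv, (h₂ θ).deriv, sub_add_cancel]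

theorem contDiff_two (h : SolvesHarmonicOscillator R p) (hR : Continuous R) :
    ContDiff ℝ 2 p := by
  have hp := h.continuous
  obtain ⟨p', h₁, h₂⟩ := h
  rw [show (2 : WithTop ℕ∞) = 1 + 1 from rfl, contDiff_succ_iff_deriv,
    funext fun θ => (h₁ θ).deriv, contDiff_one_iff_deriv, funext fun θ => (h₂ θ).deriv]
  exact ⟨fun θ => (h₁ θ).differentiableAt, by simp,
    fun θ => (h₂ θ).differentiableAt, hR.sub hp⟩

theorem sub (hq : SolvesHarmonicOscillator R q) (hp : SolvesHarmonicOscillator R p) :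
    SolvesHarmonicOscillator 0 (q - p) := by
  obtain ⟨q', hq₁, hq₂⟩ := hq
  obtain ⟨p', hp₁, hp₂⟩ := hp
  exact ⟨q' - p', fun θ => (hq₁ θ).sub (hp₁ θ),
    fun θ => by simpa using (hq₂ θ).sub (hp₂ θ)⟩

theorem add_cos_sin (h : SolvesHarmonicOscillator R p) (a b : ℝ) :
    SolvesHarmonicOscillator R fun θ => p θ + a * cos θ + b * sin θ := by
  obtain ⟨p', h₁, h₂⟩ := h
  refine ⟨fun θ => p' θ - a * sin θ + b * cos θ, fun θ => ?_, fun θ => ?_⟩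
  · refine (((h₁ θ).add ((hasDerivAt_cos θ).const_mul a)).add
      ((hasDerivAt_sin θ).const_mul b)).congr_deriv ?_
    ring
  · refine (((h₂ θ).sub ((hasDerivAt_sin θ).const_mul a)).add
      ((hasDerivAt_cos θ).const_mul b)).congr_deriv ?_
    ring

theorem exists_eq_cos_sin (h : SolvesHarmonicOscillator 0 p) :
    ∃ a b : ℝ, ∀ θ, p θ = a * cos θ + b * sin θ := by
  obtain ⟨p', h₁, h₂⟩ := h
  have hu : ∀ θ, HasDerivAt (fun θ => p θ * cos θ - p' θ * sin θ) 0 θ := fun θ => by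
    refine (((h₁ θ).mul (hasDerivAt_cos θ)).sub
      ((h₂ θ).mul (hasDerivAt_sin θ))).congr_deriv ?_
    simp only [Pi.zero_apply]
    ring
  have hv : ∀ θ, HasDerivAt (fun θ => p θ * sin θ + p' θ * cos θ) 0 θ := fun θ => by
    refine (((h₁ θ).mul (hasDerivAt_sin θ)).add
      ((h₂ θ).mul (hasDerivAt_cos θ))).congr_deriv ?_
    simp only [Pi.zero_apply]
    ring
  refine ⟨p 0, p' 0, fun θ => ?_⟩
  have hu_const := is_const_of_deriv_eq_zero (fun x => (hu x).differentiableAt)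
    (fun x => (hu x).deriv) θ 0
  have hv_const := is_const_of_deriv_eq_zero (fun x => (hv x).differentiableAt)
    (fun x => (hv x).deriv) θ 0
  simp only [cos_zero, sin_zero, mul_one, mul_zero, sub_zero, zero_add] at hu_const hv_const
  linear_combination cos θ * hu_const + sin θ * hv_const - p θ * sin_sq_add_cos_sq θ

theorem eq_of_integral_mul_cos_sin_eq (hq : SolvesHarmonicOscillator R q)
    (hp : SolvesHarmonicOscillator R p)
    (hcos : ∫ θ in 0..2 * π, q θ * cos θ = ∫ θ in 0..2 * π, p θ * cos θ)
    (hsin : ∫ θ in 0..2 * π, q θ * sin θ = ∫ θ in 0..2 * π, p θ * sin θ) : q = p := by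
  obtain ⟨a, b, hab⟩ := (hq.sub hp).exists_eq_cos_sin
  simp only [Pi.sub_apply] at hab
  have hq_eq : q = fun θ => p θ + a * cos θ + b * sin θ :=
    funext fun θ => by linear_combination hab θ
  have hp_int : IntervalIntegrable p volume 0 (2 * π) := hp.continuous.intervalIntegrable _ _
  rw [hq_eq, integral_add_cos_sin_mul_cos hp_int] at hcos
  rw [hq_eq, integral_add_cos_sin_mul_sin hp_int] at hsin
  have ha : a = 0 := by simpa [pi_ne_zero] using hcos
  have hb : b = 0 := by simpa [pi_ne_zero] using hsin
  simp [hq_eq, ha, hb]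

end SolvesHarmonicOscillator

noncomputable def variationOfParameters (R : ℝ → ℝ) (θ : ℝ) : ℝ :=
  sin θ * (∫ t in 0..θ, R t * cos t) - cos θ * ∫ t in 0..θ, R t * sin t

section VariationOfParameters

variable {R : ℝ → ℝ}

theorem solvesHarmonicOscillator_variationOfParameters (hR : Continuous R) :
    SolvesHarmonicOscillator R (variationOfParameters R) := by
  have hRcos : Continuous fun t => R t * cos t := by fun_prop
  have hRsin : Continuous fun t => R t * sin t := by fun_prop
  have hF θ := (hRcos.integral_hasStrictDerivAt 0 θ).hasDerivAt
  have hG θ := (hRsin.integral_hasStrictDerivAt 0 θ).hasDerivAt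
  refine ⟨fun θ => cos θ * (∫ t in 0..θ, R t * cos t) + sin θ * ∫ t in 0..θ, R t * sin t,
    fun θ => ?_, fun θ => ?_⟩
  · refine (((hasDerivAt_sin θ).mul (hF θ)).sub
      ((hasDerivAt_cos θ).mul (hG θ))).congr_deriv ?_
    ring
  · refine (((hasDerivAt_cos θ).mul (hF θ)).add
      ((hasDerivAt_sin θ).mul (hG θ))).congr_deriv ?_
    simp only [variationOfParameters]
    linear_combination R θ * sin_sq_add_cos_sq θ

theorem periodic_variationOfParameters (hR : Continuous R)
    (hRper : Function.Periodic R (2 * π))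
    (hRcos : ∫ θ in 0..2 * π, R θ * cos θ = 0) (hRsin : ∫ θ in 0..2 * π, R θ * sin θ = 0) :
    Function.Periodic (variationOfParameters R) (2 * π) := fun θ => by
  have hF := (hRper.mul cos_periodic).periodic_intervalIntegral_of_integral_eq_zero
    (fun _ _ => (hR.mul continuous_cos).intervalIntegrable _ _) hRcos θ
  have hG := (hRper.mul sin_periodic).periodic_intervalIntegral_of_integral_eq_zero
    (fun _ _ => (hR.mul continuous_sin).intervalIntegrable _ _) hRsin θ
  simp only [Pi.mul_apply] at hF hG
  simp only [variationOfParameters, hF, hG, sin_periodic θ, cos_periodic θ]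

end VariationOfParameters

/-- Fredholm-alternative solvability of `p'' + p = R` on the circle: if `R` is
continuous, `2π`-periodic, and orthogonal to `cos` and `sin`, then there is a
unique `C²`, `2π`-periodic solution `p` of `p'' + p = R` which is itself
orthogonal to `cos` and `sin`. -/
theorem fredholm_solvability (R : ℝ → ℝ) (hRc : Continuous R)
    (hRper : Function.Periodic R (2 * π))
    (hRcos : ∫ θ in (0 : ℝ)..(2 * π), R θ * Real.cos θ = 0)
    (hRsin : ∫ θ in (0 : ℝ)..(2 * π), R θ * Real.sin θ = 0) :
    ∃! p : ℝ → ℝ,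
      ContDiff ℝ 2 p ∧ Function.Periodic p (2 * π) ∧
      (∀ θ : ℝ, deriv (deriv p) θ + p θ = R θ) ∧
      (∫ θ in (0 : ℝ)..(2 * π), p θ * Real.cos θ = 0) ∧
      (∫ θ in (0 : ℝ)..(2 * π), p θ * Real.sin θ = 0) := by
  obtain ⟨p₀, hp₀, hp₀_per⟩ :
      ∃ p₀, SolvesHarmonicOscillator R p₀ ∧ Function.Periodic p₀ (2 * π) :=
    ⟨_, solvesHarmonicOscillator_variationOfParameters hRc,
      periodic_variationOfParameters hRc hRper hRcos hRsin⟩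
  have hp₀_int : IntervalIntegrable p₀ volume 0 (2 * π) := hp₀.continuous.intervalIntegrable _ _
  obtain ⟨a, ha⟩ : ∃ a, a * π = -∫ θ in 0..2 * π, p₀ θ * cos θ :=
    ⟨_, div_mul_cancel₀ _ pi_ne_zero⟩
  obtain ⟨b, hb⟩ : ∃ b, b * π = -∫ θ in 0..2 * π, p₀ θ * sin θ :=
    ⟨_, div_mul_cancel₀ _ pi_ne_zero⟩
  have hp := hp₀.add_cos_sin a b
  have hp_per : Function.Periodic (fun θ => p₀ θ + a * cos θ + b * sin θ) (2 * π) := fun θ => by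
    simp only [hp₀_per θ, cos_periodic θ, sin_periodic θ]
  have hp_cos : ∫ θ in 0..2 * π, (p₀ θ + a * cos θ + b * sin θ) * cos θ = 0 := by
    rw [integral_add_cos_sin_mul_cos hp₀_int, ha, add_neg_cancel]
  have hp_sin : ∫ θ in 0..2 * π, (p₀ θ + a * cos θ + b * sin θ) * sin θ = 0 := by
    rw [integral_add_cos_sin_mul_sin hp₀_int, hb, add_neg_cancel]
  refine ⟨_, ⟨hp.contDiff_two hRc, hp_per, hp.deriv_deriv_add, hp_cos, hp_sin⟩, ?_⟩
  rintro q ⟨hq, -, hq_ode, hq_cos, hq_sin⟩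
  exact (SolvesHarmonicOscillator.of_contDiff hq hq_ode).eq_of_integral_mul_cos_sin_eq hp
    (hq_cos.trans hp_cos.symm) (hq_sin.trans hp_sin.symm)
end

section
/- For all real numbers s, t with 3 ≤ s < t, one has t·tan(π/(2t)) < s·tan(π/(2s)); equivalently, the quantity π − n·tan(π/(2n)) is strictly increasing in n on [3, ∞). Consequently, for odd integers 3 ≤ m < n and any B > 0, (B²/2)·(π − m·tan(π/(2m))) < (B²/2)·(π − n·tan(π/(2n))). -/
/-!
With `x = π / (2t)` one has `t · tan (π / (2t)) = (π / 2) · (tan x / x)`, and `x` decreases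
from `π / 6` towards `0` as `t` grows from `3`. The slope `tan x / x` is strictly increasing on
`(0, π / 2)`: its derivative has the sign of `x - sin x cos x = x - sin (2x) / 2 > 0`.
-/

open Real Set

lemma sin_mul_cos_lt_self {x : ℝ} (hx : 0 < x) : sin x * cos x < x := by
  have h := sin_lt (by positivity : 0 < 2 * x)
  rw [sin_two_mul] at h
  linarith

lemma strictMonoOn_tan_div_self : StrictMonoOn (fun x => tan x / x) (Ioo 0 (π / 2)) := by
  have hcos : ∀ x ∈ Ioo 0 (π / 2), 0 < cos x := fun x hx =>
    cos_pos_of_mem_Ioo ⟨by linarith [hx.1, pi_pos], hx.2⟩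
  have hderiv : ∀ x ∈ Ioo 0 (π / 2),
      HasDerivAt (fun x => tan x / x) ((1 / cos x ^ 2 * x - tan x * 1) / x ^ 2) x :=
    fun x hx => (hasDerivAt_tan (hcos x hx).ne').div (hasDerivAt_id x) hx.1.ne'
  refine strictMonoOn_of_hasDerivWithinAt_pos (convex_Ioo _ _)
    (fun x hx => (hderiv x hx).continuousAt.continuousWithinAt)
    (fun x hx => (hderiv x (interior_subset hx)).hasDerivWithinAt) fun x hx => ?_
  rw [interior_Ioo] at hx
  have hc := hcos x hx
  have hnum : 1 / cos x ^ 2 * x - tan x * 1 = (x - sin x * cos x) / cos x ^ 2 := by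
    rw [tan_eq_sin_div_cos]
    field_simp
  rw [hnum]
  have hpos : 0 < x - sin x * cos x := sub_pos.2 (sin_mul_cos_lt_self hx.1)
  have := hx.1
  positivity

lemma mul_tan_pi_div_two_mul_eq {t : ℝ} (ht : t ≠ 0) :
    t * tan (π / (2 * t)) = π / 2 * (tan (π / (2 * t)) / (π / (2 * t))) := by
  field_simp

lemma pi_div_two_mul_mem_Ioo {t : ℝ} (ht : 1 < t) : π / (2 * t) ∈ Ioo 0 (π / 2) := by
  have hπ := pi_pos
  refine ⟨by positivity, ?_⟩
  rw [div_lt_div_iff₀ (by linarith) two_pos]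
  nlinarith

lemma strictAntiOn_mul_tan_pi_div_two_mul :
    StrictAntiOn (fun t => t * tan (π / (2 * t))) (Ioi 1) := by
  intro s (hs : 1 < s) t (ht : 1 < t) hst
  have hlt : π / (2 * t) < π / (2 * s) :=
    div_lt_div_of_pos_left pi_pos (by linarith) (by linarith)
  have hslope :=
    strictMonoOn_tan_div_self (pi_div_two_mul_mem_Ioo ht) (pi_div_two_mul_mem_Ioo hs) hlt
  simp only [mul_tan_pi_div_two_mul_eq (by positivity : t ≠ 0),
    mul_tan_pi_div_two_mul_eq (by positivity : s ≠ 0)]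
  exact mul_lt_mul_of_pos_left hslope (by positivity)

/-- The function `t ↦ t·tan(π/(2t))` is strictly decreasing on `[3, ∞)`;
equivalently `π − n·tan(π/(2n))` is strictly increasing there. Consequently the
area `(B²/2)·(π − n·tan(π/(2n)))` of a Reuleaux polygon of width `B` with `n`
sides is strictly increasing in the (odd) number of sides `n`, so the Reuleaux
triangle has the smallest area among Reuleaux polygons of width `B`. -/
theorem reuleaux_polygon_area_increasing :
    (∀ s t : ℝ, 3 ≤ s → s < t → t * tan (π / (2 * t)) < s * tan (π / (2 * s))) ∧
      ∀ m n : ℕ, Odd m → Odd n → 3 ≤ m → m < n → ∀ B : ℝ, 0 < B →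
        B ^ 2 / 2 * (π - (m : ℝ) * tan (π / (2 * m))) <
          B ^ 2 / 2 * (π - (n : ℝ) * tan (π / (2 * n))) := by
  have hdecr :
      ∀ s t : ℝ, 3 ≤ s → s < t → t * tan (π / (2 * t)) < s * tan (π / (2 * s)) :=
    fun s t hs hst => strictAntiOn_mul_tan_pi_div_two_mul (show (1 : ℝ) < s by linarith)
      (show (1 : ℝ) < t by linarith) hst
  refine ⟨hdecr, fun m n _ _ hm hmn B hB => ?_⟩
  have h := hdecr m n (by exact_mod_cast hm) (by exact_mod_cast hmn)
  gcongr
end
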